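/- Let D be a vertex-transitive digraph of finite out-valency m whose descendant subdigraph Γ satisfies P0, P1, P2 but not P3, with N the stabilization index of the in-valency sequence of Γ. Then for every n ≥ N−1, the quotient digraph D/δ_n has out-valency 1. -/
import Mathlib


variable {V : Type*}

/-- Directed walks of length `n` (`n`-arcs). -/
def arcOf (E : V → V → Prop) : ℕ → V → V → Prop
  | 0 => fun x y => x = y
  | n + 1 => fun x y => ∃ z, E x z ∧ arcOf E n z y

/-- Vertices reachable from `x` by a directed path of length exactly `n`. -/
def descN (E : V → V → Prop) (n : ℕ) (x : V) : Set V := {y | arcOf E n x y}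

/-- The descendant set of `x` (including `x` itself). -/
def desc (E : V → V → Prop) (x : V) : Set V := {y | ∃ n, arcOf E n x y}

theorem self_mem_desc (E : V → V → Prop) (x : V) : x ∈ desc E x := ⟨0, by simp [arcOf]⟩

def descSet (E : V → V → Prop) (S : Set V) : Set V := ⋃ x ∈ S, desc E x

theorem self_mem_descSet (E : V → V → Prop) {S : Set V} {x : V} (hx : x ∈ S) :
    x ∈ descSet E S := Set.mem_biUnion hx (self_mem_desc E x)

def outSet (E : V → V → Prop) (x : V) : Set V := {y | E x y}

def inSet (E : V → V → Prop) (x : V) : Set V := {y | E y x}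

def IsAut (E : V → V → Prop) (g : Equiv.Perm V) : Prop := ∀ x y, E x y ↔ E (g x) (g y)

def Rooted (E : V → V → Prop) (α : V) : Prop := ∀ y, y ∈ desc E α

def P0 (E : V → V → Prop) (α : V) (m : ℕ) : Prop :=
  0 < m ∧ (∀ x, (outSet E x).Finite ∧ (outSet E x).ncard = m) ∧
    ∀ s t : ℕ, s ≠ t → Disjoint (descN E s α) (descN E t α)

def P1 (E : V → V → Prop) : Prop :=
  ∀ u : V, ∃ f : desc E u ≃ V, ∀ x y : desc E u, (E x.1 y.1 ↔ E (f x) (f y))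

def P2 (E : V → V → Prop) (α : V) : Prop :=
  ∀ i : ℕ, ∀ x ∈ descN E i α, ∀ y ∈ descN E i α,
    ∃ g : Equiv.Perm V, IsAut E g ∧ g α = α ∧ g x = y

def P3 (E : V → V → Prop) (α : V) : Prop :=
  ∀ i : ℕ, (descN E i α).ncard < (descN E (i + 1) α).ncard

def EdgeTrans (E : V → V → Prop) : Prop :=
  ∀ a b c d : V, E a b → E c d → ∃ g : Equiv.Perm V, IsAut E g ∧ g a = c ∧ g b = d

def VertexTrans (E : V → V → Prop) : Prop :=
  ∀ u v : V, ∃ g : Equiv.Perm V, IsAut E g ∧ g u = v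

def NoDirectedCycles (E : V → V → Prop) : Prop :=
  ∀ s : ℕ, 1 ≤ s → ∀ x : V, ¬ arcOf E s x x

def HasPropZ {W : Type*} (E : W → W → Prop) : Prop :=
  ∃ f : W → ℤ, Function.Surjective f ∧ ∀ x y : W, E x y → f y = f x + 1

def deltaSetoid (E : V → V → Prop) (n : ℕ) : Setoid V :=
  ⟨fun u v => descN E n u = descN E n v, ⟨fun _ => rfl, Eq.symm, Eq.trans⟩⟩

def QEdge (E : V → V → Prop) (n : ℕ)
    (A B : Quotient (deltaSetoid E n)) : Prop :=
  ∃ a b : V, Quotient.mk (deltaSetoid E n) a = A ∧ Quotient.mk (deltaSetoid E n) b = B ∧ E a b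

def cls (E : V → V → Prop) (n : ℕ) (v : V) : Set V := {u | descN E n u = descN E n v}

def QEdgeSet (E : V → V → Prop) (A B : Set V) : Prop := ∃ a ∈ A, ∃ b ∈ B, E a b

def WDH (E : V → V → Prop) : Prop :=
  VertexTrans E ∧
  ∀ (X Y : Finset V) (f : descSet E (↑X : Set V) ≃ descSet E (↑Y : Set V)),
    (∀ a b : descSet E (↑X : Set V), (E a.1 b.1 ↔ E (f a).1 (f b).1)) →
    ∃ g : Equiv.Perm V, IsAut E g ∧
      ∀ (x : V) (hx : x ∈ X), g x = (f ⟨x, self_mem_descSet E (by exact_mod_cast hx)⟩).1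

def EdgeT (E : V → V → Prop) := {p : V × V // E p.1 p.2}

def reachSetoid (E : V → V → Prop) : Setoid (EdgeT E) :=
  ⟨Relation.EqvGen (fun a b => a.1.1 = b.1.1 ∨ a.1.2 = b.1.2),
    Relation.EqvGen.is_equivalence _⟩

def AlSources (E : V → V → Prop) (A : Quotient (reachSetoid E)) : Set V :=
  {v | ∃ e : EdgeT E, Quotient.mk (reachSetoid E) e = A ∧ v = e.1.1}

def AlSinks (E : V → V → Prop) (A : Quotient (reachSetoid E)) : Set V :=
  {v | ∃ e : EdgeT E, Quotient.mk (reachSetoid E) e = A ∧ v = e.1.2}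

def AlEdge (E : V → V → Prop) (A B : Quotient (reachSetoid E)) : Prop :=
  ∃ v, v ∈ AlSinks E A ∧ v ∈ AlSources E B

section AuxLemmas

variable {V : Type*}

theorem arcOf_succ_right (E : V → V → Prop) (n : ℕ) :
    ∀ x y : V, arcOf E (n + 1) x y ↔ ∃ z, arcOf E n x z ∧ E z y := by
  induction n with
  | zero =>
    intro x y
    constructor
    · rintro ⟨z, hz, h0⟩
      exact ⟨x, rfl, h0 ▸ hz⟩
    · rintro ⟨z, h0, hz⟩
      exact ⟨y, (show x = z from h0) ▸ hz, rfl⟩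
  | succ n ih =>
    intro x y
    constructor
    · rintro ⟨w, hw, harc⟩
      obtain ⟨z, hz, hzy⟩ := (ih w y).1 harc
      exact ⟨z, ⟨w, hw, hz⟩, hzy⟩
    · rintro ⟨z, ⟨w, hw, hz⟩, hzy⟩
      exact ⟨w, hw, (ih w y).2 ⟨z, hz, hzy⟩⟩

theorem arcOf_append {E : V → V → Prop} :
    ∀ {k n : ℕ} {x y z : V}, arcOf E k x y → arcOf E n y z → arcOf E (k + n) x z := by
  intro k
  induction k with
  | zero =>
    intro n x y z h1 h2
    have : x = y := h1
    simpa [this, Nat.zero_add] using h2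
  | succ k ih =>
    rintro n x y z ⟨w, hw, harc⟩ h2
    have : k + 1 + n = (k + n) + 1 := by omega
    rw [this]
    exact ⟨w, hw, ih harc h2⟩

theorem arcOf_of_iso {A B : Type*} {EA : A → A → Prop} {EB : B → B → Prop}
    (f : A ≃ B) (H : ∀ x y, EA x y ↔ EB (f x) (f y)) :
    ∀ (n : ℕ) (x y : A), arcOf EA n x y ↔ arcOf EB n (f x) (f y) := by
  intro n
  induction n with
  | zero =>
    intro x y
    exact ⟨fun h => congrArg f h, fun h => f.injective h⟩
  | succ n ih =>
    intro x y
    constructor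
    · rintro ⟨z, hz, harc⟩
      exact ⟨f z, (H x z).1 hz, (ih z y).1 harc⟩
    · rintro ⟨w, hw, harc⟩
      refine ⟨f.symm w, ?_, ?_⟩
      · have := (H x (f.symm w)).2
        rw [f.apply_symm_apply] at this
        exact this hw
      · have := (ih (f.symm w) y).2
        rw [f.apply_symm_apply] at this
        exact this harc

theorem arcOf_subtype_iff (E : V → V → Prop) (a : V) :
    ∀ (n : ℕ) (x : desc E a) (y : V),
      arcOf E n x.1 y ↔
        ∃ hy : y ∈ desc E a, arcOf (fun p q : desc E a => E p.1 q.1) n x ⟨y, hy⟩ := by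
  intro n
  induction n with
  | zero =>
    intro x y
    constructor
    · intro h
      have hy : y ∈ desc E a := h ▸ x.2
      exact ⟨hy, by cases x; exact Subtype.ext h⟩
    · rintro ⟨hy, h⟩
      exact congrArg Subtype.val h
  | succ n ih =>
    intro x y
    constructor
    · rintro ⟨z, hxz, harc⟩
      obtain ⟨k, hk⟩ := x.2
      have hz : z ∈ desc E a := ⟨k + 1, arcOf_append hk ⟨z, hxz, rfl⟩⟩
      obtain ⟨hy, harc'⟩ := (ih ⟨z, hz⟩ y).1 harc
      exact ⟨hy, ⟨⟨z, hz⟩, hxz, harc'⟩⟩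
    · rintro ⟨hy, z', hxz', harc'⟩
      exact ⟨z'.1, hxz', (ih z' y).2 ⟨hy, harc'⟩⟩

theorem descN_subtype (E : V → V → Prop) (a : V) (n : ℕ) (x : desc E a) :
    descN E n x.1 = Subtype.val '' descN (fun p q : desc E a => E p.1 q.1) n x := by
  ext y
  constructor
  · intro h
    obtain ⟨hy, h'⟩ := (arcOf_subtype_iff E a n x y).1 h
    exact ⟨⟨y, hy⟩, h', rfl⟩
  · rintro ⟨⟨y', hy'⟩, h', rfl⟩
    exact (arcOf_subtype_iff E a n x y').2 ⟨hy', h'⟩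

theorem IsAut.symm' {E : V → V → Prop} {g : Equiv.Perm V} (h : IsAut E g) :
    IsAut E g.symm := by
  intro x y
  have := h (g.symm x) (g.symm y)
  simpa using this.symm

theorem descN_aut {E : V → V → Prop} {g : Equiv.Perm V} (h : IsAut E g) (n : ℕ) (x : V) :
    descN E n (g x) = g '' descN E n x := by
  ext y
  constructor
  · intro hy
    have hiff := arcOf_of_iso g h n x (g.symm y)
    rw [g.apply_symm_apply y] at hiff
    exact ⟨g.symm y, hiff.2 hy, g.apply_symm_apply y⟩
  · rintro ⟨z, hz, rfl⟩
    exact (arcOf_of_iso g h n x z).1 hz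

end AuxLemmas

section Levels

variable {W : Type*} {F : W → W → Prop} {β : W} {m : ℕ}

theorem lev_finite (hout : ∀ x : W, (outSet F x).Finite) :
    ∀ s : ℕ, (descN F s β).Finite := by
  intro s
  induction s with
  | zero =>
    refine Set.Finite.subset (Set.finite_singleton β) ?_
    intro y hy
    exact (show β = y from hy).symm
  | succ s ih =>
    refine Set.Finite.subset (ih.biUnion (fun x _ => hout x)) ?_
    intro y hy
    obtain ⟨z, hz, hzy⟩ := (arcOf_succ_right F s β y).1 hy
    exact Set.mem_biUnion hz hzy

theorem lev_nonempty (h0 : P0 F β m) : ∀ s : ℕ, (descN F s β).Nonempty := by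
  intro s
  induction s with
  | zero => exact ⟨β, rfl⟩
  | succ s ih =>
    obtain ⟨x, hx⟩ := ih
    have hne : (outSet F x).Nonempty := by
      apply Set.nonempty_of_ncard_ne_zero
      rw [(h0.2.1 x).2]
      have := h0.1
      omega
    obtain ⟨y, hy⟩ := hne
    exact ⟨y, (arcOf_succ_right F s β y).2 ⟨x, hx, hy⟩⟩

theorem lev_unique (hroot : Rooted F β) (h0 : P0 F β m) {x : W} {s t : ℕ}
    (hs : x ∈ descN F s β) (ht : x ∈ descN F t β) : s = t := by
  by_contra hst
  exact Set.disjoint_left.1 (h0.2.2 s t hst) hs ht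

theorem lev_of_edge {x y : W} {s : ℕ} (hx : x ∈ descN F s β) (hxy : F x y) :
    y ∈ descN F (s + 1) β :=
  (arcOf_succ_right F s β y).2 ⟨x, hx, hxy⟩

theorem lev_in (hroot : Rooted F β) (h0 : P0 F β m) {x y : W} {s : ℕ}
    (hxy : F x y) (hy : y ∈ descN F (s + 1) β) : x ∈ descN F s β := by
  obtain ⟨t, ht⟩ := hroot x
  have hy' : y ∈ descN F (t + 1) β := lev_of_edge ht hxy
  have : t + 1 = s + 1 := lev_unique hroot h0 hy' hy
  have : t = s := by omega
  exact this ▸ ht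

theorem no_cycle (hroot : Rooted F β) (h0 : P0 F β m) (k : ℕ) (x : W) :
    ¬ arcOf F (k + 1) x x := by
  intro hc
  obtain ⟨t, ht⟩ := hroot x
  have h2 : x ∈ descN F (t + (k + 1)) β := arcOf_append ht hc
  have := lev_unique hroot h0 ht h2
  omega

theorem root_fix (hroot : Rooted F β) (h0 : P0 F β m) (u : W)
    (f : desc F u ≃ W) (HF : ∀ x y : desc F u, F x.1 y.1 ↔ F (f x) (f y)) :
    f ⟨u, self_mem_desc F u⟩ = β := by
  set ρ : desc F u := ⟨u, self_mem_desc F u⟩ with hρ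
  by_contra hne
  obtain ⟨s, hw⟩ := hroot (f ρ)
  obtain ⟨t, rfl⟩ : ∃ t, s = t + 1 := by
    cases s with
    | zero => exact absurd (show β = f ρ from hw).symm hne
    | succ t => exact ⟨t, rfl⟩
  obtain ⟨x, _, hxw⟩ := (arcOf_succ_right F t β (f ρ)).1 hw
  have hx'u : F (f.symm x).1 u := by
    have := (HF (f.symm x) ρ).2
    rw [f.apply_symm_apply] at this
    exact this hxw
  obtain ⟨k, hk⟩ := (f.symm x).2
  exact no_cycle hroot h0 k u (arcOf_append hk ⟨u, hx'u, rfl⟩)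

theorem card_descN (hroot : Rooted F β) (h0 : P0 F β m) (h1 : P1 F) (u : W) (l : ℕ) :
    (descN F l u).ncard = (descN F l β).ncard ∧ (descN F l u).Finite := by
  obtain ⟨f, HF⟩ := h1 u
  have hfρ := root_fix hroot h0 u f HF
  set ρ : desc F u := ⟨u, self_mem_desc F u⟩ with hρ
  have hsub : descN F l u = Subtype.val '' descN (fun p q : desc F u => F p.1 q.1) l ρ :=
    descN_subtype F u l ρ
  have hpre : descN (fun p q : desc F u => F p.1 q.1) l ρ = f ⁻¹' (descN F l β) := by
    ext z
    simp only [descN, Set.mem_setOf_eq, Set.mem_preimage]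
    rw [arcOf_of_iso f HF l ρ z, hfρ]
  have hfin : (descN F l β).Finite := lev_finite (fun x => (h0.2.1 x).1) l
  have hfin2 : (descN (fun p q : desc F u => F p.1 q.1) l ρ).Finite := by
    rw [hpre]
    exact Set.Finite.preimage (f.injective.injOn) hfin
  constructor
  · have hps : (⇑f ⁻¹' descN F l β) = f.symm '' descN F l β := by
      rw [Equiv.image_eq_preimage_symm, Equiv.symm_symm]
    rw [hsub, Set.ncard_image_of_injective _ Subtype.val_injective, hpre, hps,
      Set.ncard_image_of_injective _ f.symm.injective]
  · rw [hsub]; exact hfin2.image _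

theorem r_mono (hroot : Rooted F β) (h0 : P0 F β m) (h1 : P1 F) {r : ℕ → ℕ}
    (hr : ∀ i, 1 ≤ i → ∀ x ∈ descN F i β, (inSet F x).ncard = r i)
    (i : ℕ) (hi : 1 ≤ i) : r i ≤ r (i + 1) := by
  obtain ⟨u, hu⟩ := lev_nonempty h0 1
  obtain ⟨f, HF⟩ := h1 u
  have hfρ := root_fix hroot h0 u f HF
  set ρ : desc F u := ⟨u, self_mem_desc F u⟩ with hρ
  obtain ⟨z, hz⟩ := lev_nonempty h0 i
  set y : desc F u := f.symm z with hy
  have hfy : f y = z := f.apply_symm_apply z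
  have hyarc : arcOf (fun p q : desc F u => F p.1 q.1) i ρ y := by
    rw [arcOf_of_iso f HF i ρ y, hfρ, hfy]
    exact hz
  have hyu : arcOf F i u y.1 := (arcOf_subtype_iff F u i ρ y.1).2 ⟨y.2, hyarc⟩
  have hy1 : y.1 ∈ descN F (i + 1) β := by
    have := arcOf_append hu hyu
    rwa [Nat.add_comm 1 i] at this
  have hAsub : Subtype.val '' (inSet (fun p q : desc F u => F p.1 q.1) y) ⊆ inSet F y.1 := by
    rintro _ ⟨x, hx, rfl⟩
    exact hx
  have hBfin : (inSet F y.1).Finite := by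
    refine Set.Finite.subset (lev_finite (β := β) (fun x => (h0.2.1 x).1) i) ?_
    intro w hw
    exact lev_in hroot h0 hw hy1
  have himg : f '' (inSet (fun p q : desc F u => F p.1 q.1) y) = inSet F z := by
    ext w
    constructor
    · rintro ⟨x, hx, rfl⟩
      have := (HF x y).1 hx
      rwa [hfy] at this
    · intro hw
      refine ⟨f.symm w, ?_, f.apply_symm_apply w⟩
      have := (HF (f.symm w) y).2
      rw [f.apply_symm_apply, hfy] at this
      exact this hw
  have hc1 : (inSet (fun p q : desc F u => F p.1 q.1) y).ncard = r i := by
    rw [← Set.ncard_image_of_injective _ f.injective, himg]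
    exact hr i hi z hz
  calc r i = (Subtype.val '' (inSet (fun p q : desc F u => F p.1 q.1) y)).ncard := by
        rw [Set.ncard_image_of_injective _ Subtype.val_injective, hc1]
    _ ≤ (inSet F y.1).ncard := Set.ncard_le_ncard hAsub hBfin
    _ = r (i + 1) := hr (i + 1) (by omega) y.1 hy1

end Levels

section Counting

variable {W : Type*} {F : W → W → Prop} {β : W} {m : ℕ}

theorem lev_count (hroot : Rooted F β) (h0 : P0 F β m) {r : ℕ → ℕ}
    (hr : ∀ i, 1 ≤ i → ∀ x ∈ descN F i β, (inSet F x).ncard = r i) (i : ℕ) :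
    m * (descN F i β).ncard = r (i + 1) * (descN F (i + 1) β).ncard := by
  classical
  have hfin := fun s => lev_finite (β := β) (fun x => (h0.2.1 x).1) s
  set A : Finset W := (hfin i).toFinset with hA
  set B : Finset W := (hfin (i + 1)).toFinset with hB
  have hAB : ∀ a ∈ A, (B.filter fun b => F a b).card = m := by
    intro a ha
    have haL : a ∈ descN F i β := (Set.Finite.mem_toFinset _).1 ha
    have hset : (B.filter fun b => F a b) = (h0.2.1 a).1.toFinset := by
      ext b
      simp only [Finset.mem_filter, Set.Finite.mem_toFinset, hB]
      constructor
      · rintro ⟨_, h⟩; exact h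
      · intro h; exact ⟨lev_of_edge haL h, h⟩
    rw [hset, ← Set.ncard_eq_toFinset_card _ (h0.2.1 a).1]
    exact (h0.2.1 a).2
  have hBA : ∀ b ∈ B, (A.filter fun a => F a b).card = r (i + 1) := by
    intro b hb
    have hbL : b ∈ descN F (i + 1) β := (Set.Finite.mem_toFinset _).1 hb
    have hinfin : (inSet F b).Finite :=
      Set.Finite.subset (hfin i) (fun w hw => lev_in hroot h0 hw hbL)
    have hset : (A.filter fun a => F a b) = hinfin.toFinset := by
      ext a
      simp only [Finset.mem_filter, Set.Finite.mem_toFinset, hA]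
      constructor
      · rintro ⟨_, h⟩; exact h
      · intro h
        exact ⟨lev_in hroot h0 (show F a b from h) hbL, h⟩
    rw [hset, ← Set.ncard_eq_toFinset_card _ hinfin]
    exact hr (i + 1) (by omega) b hbL
  have hsum : ∑ a ∈ A, (B.filter fun b => F a b).card
      = ∑ b ∈ B, (A.filter fun a => F a b).card := by
    simp only [Finset.card_filter]
    exact Finset.sum_comm
  rw [Finset.sum_congr rfl hAB, Finset.sum_congr rfl hBA] at hsum
  rw [Finset.sum_const, Finset.sum_const, smul_eq_mul, smul_eq_mul] at hsum
  rw [Set.ncard_eq_toFinset_card _ (hfin i), Set.ncard_eq_toFinset_card _ (hfin (i + 1))]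
  rw [Nat.mul_comm m, Nat.mul_comm (r (i + 1))]
  exact hsum

theorem key_levels (hroot : Rooted F β) (h0 : P0 F β m) (h1 : P1 F) {r : ℕ → ℕ}
    (hr : ∀ i, 1 ≤ i → ∀ x ∈ descN F i β, (inSet F x).ncard = r i)
    (hnot3 : ¬ P3 F β) (N : ℕ) (hN1 : 1 ≤ N) (hNconst : ∀ j, N ≤ j → r j = r N) :
    ∀ l, N - 1 ≤ l → ∀ u ∈ descN F 1 β, descN F l u = descN F (l + 1) β := by
  classical
  set c : ℕ → ℕ := fun s => (descN F s β).ncard with hc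
  have hfin := fun s => lev_finite (β := β) (fun x : W => (h0.2.1 x).1) s
  have hcpos : ∀ s, 1 ≤ c s := fun s => Set.ncard_pos (hfin s) |>.2 (lev_nonempty h0 s)
  have hcount : ∀ i, m * c i = r (i + 1) * c (i + 1) := fun i => lev_count hroot h0 hr i
  have hrmono : ∀ j k, 1 ≤ j → j ≤ k → r j ≤ r k := by
    intro j k hj hjk
    obtain ⟨d, rfl⟩ := Nat.exists_eq_add_of_le hjk
    clear hjk
    induction d with
    | zero => exact le_refl _
    | succ d ih =>
      have : j + (d + 1) = (j + d) + 1 := by omega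
      rw [this]
      exact le_trans ih (r_mono hroot h0 h1 hr (j + d) (by omega))
  -- from ¬P3, get a level where r ≥ m
  simp only [P3, not_forall, not_lt] at hnot3
  obtain ⟨i0, hi0⟩ := hnot3
  have hm_le : m ≤ r (i0 + 1) := by
    have h := hcount i0
    have h2 : m * c i0 ≤ r (i0 + 1) * c i0 :=
      h.trans_le (Nat.mul_le_mul_left _ hi0)
    exact Nat.le_of_mul_le_mul_right h2 (hcpos i0)
  -- r is bounded above by m
  have hr_le : ∀ j, 1 ≤ j → r j ≤ m := by
    intro j hj
    by_contra hgt
    push_neg at hgt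
    have hdec : ∀ d, c (j + d) < c (j - 1 + d) := by
      intro d
      have hidx : j - 1 + d + 1 = j + d := by omega
      have h := hcount (j - 1 + d)
      rw [hidx] at h
      have hrge : m + 1 ≤ r (j + d) := le_trans hgt (hrmono j (j + d) hj (by omega))
      have : m * c (j - 1 + d) ≥ (m + 1) * c (j + d) :=
        h ▸ Nat.mul_le_mul_right _ hrge
      have hp := hcpos (j + d)
      nlinarith [hp]
    have hbnd : ∀ d, c (j - 1 + d) + d ≤ c (j - 1) := by
      intro d
      induction d with
      | zero => simp
      | succ d ih =>
        have h1 : j - 1 + (d + 1) = j + d := by omega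
        rw [h1]
        have := hdec d
        omega
    have := hbnd (c (j - 1) + 1)
    have := hcpos (j - 1 + (c (j - 1) + 1))
    omega
  -- r N = m
  have hrN : r N = m := by
    have hK : N ≤ max N (i0 + 1) := le_max_left _ _
    have h1' : r (max N (i0 + 1)) = r N := hNconst _ hK
    have h2' : r (max N (i0 + 1)) = m := by
      refine le_antisymm (hr_le _ (by omega)) ?_
      exact le_trans hm_le (hrmono (i0 + 1) _ (by omega) (le_max_right _ _))
    rw [← h1', h2']
  -- levels have constant size from N - 1 on
  have hceq : ∀ j, N ≤ j + 1 → c j = c (j + 1) := by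
    intro j hj
    have h := hcount j
    rw [hNconst (j + 1) hj, hrN] at h
    exact Nat.eq_of_mul_eq_mul_left h0.1 h
  have hcconst : ∀ d, c (N - 1 + d) = c (N - 1) := by
    intro d
    induction d with
    | zero => rfl
    | succ d ih =>
      have h1 : N - 1 + (d + 1) = (N - 1 + d) + 1 := by omega
      rw [h1, ← hceq (N - 1 + d) (by omega), ih]
  have hclev : ∀ l, N - 1 ≤ l → c l = c (N - 1) := by
    intro l hl
    obtain ⟨d, rfl⟩ := Nat.exists_eq_add_of_le hl
    exact hcconst d
  -- conclusion
  intro l hl u hu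
  have hsub : descN F l u ⊆ descN F (l + 1) β := by
    intro y hy
    have := arcOf_append hu hy
    rwa [Nat.add_comm 1 l] at this
  refine Set.eq_of_subset_of_ncard_le hsub ?_ (hfin (l + 1))
  have hcard := (card_descN hroot h0 h1 u l).1
  rw [hcard]
  show c (l + 1) ≤ c l
  rw [hclev l hl, hclev (l + 1) (by omega)]

end Counting

section AuxLemmas

/-- if the descendant subdigraph satisfies P0–P2 but not P3 then,
for `n ≥ N−1`, the quotient digraph `D/δ_n` has out-valency 1. -/
theorem quotient_outvalency_one (E : V → V → Prop) (α : V) (m N : ℕ) (r : ℕ → ℕ)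
    (hvt : VertexTrans E)
    (hval : ∀ x : V, (outSet E x).Finite ∧ (outSet E x).ncard = m)
    (hΓroot : Rooted (fun x y : desc E α => E x.1 y.1) ⟨α, self_mem_desc E α⟩)
    (hΓ0 : P0 (fun x y : desc E α => E x.1 y.1) ⟨α, self_mem_desc E α⟩ m)
    (hΓ1 : P1 (fun x y : desc E α => E x.1 y.1))
    (hΓ2 : P2 (fun x y : desc E α => E x.1 y.1) ⟨α, self_mem_desc E α⟩)
    (hΓnot3 : ¬ P3 (fun x y : desc E α => E x.1 y.1) ⟨α, self_mem_desc E α⟩)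
    (hr : ∀ i : ℕ, 1 ≤ i →
      ∀ x ∈ descN (fun x y : desc E α => E x.1 y.1) i ⟨α, self_mem_desc E α⟩,
        (inSet (fun x y : desc E α => E x.1 y.1) x).ncard = r i)
    (hN1 : 1 ≤ N) (hNconst : ∀ j : ℕ, N ≤ j → r j = r N)
    (hNmin : ∀ N' : ℕ, 1 ≤ N' → (∀ j : ℕ, N' ≤ j → r j = r N') → N ≤ N') :
    ∀ n : ℕ, N - 1 ≤ n → 1 ≤ n →
      ∀ u v₁ v₂ : V, QEdgeSet E (cls E n u) (cls E n v₁) →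
        QEdgeSet E (cls E n u) (cls E n v₂) → cls E n v₁ = cls E n v₂ := by
  intro n hn _hn1 u v₁ v₂ h₁ h₂
  have hKL := key_levels hΓroot hΓ0 hΓ1 hr hΓnot3 N hN1 hNconst
  -- key step in D: any two out-neighbours of a common vertex have equal n-descendant sets
  have key : ∀ x y z : V, E x y → E x z → descN E n y = descN E n z := by
    intro x y z hxy hxz
    obtain ⟨g, hg, hga⟩ := hvt α x
    have hEy : E α (g.symm y) := by
      have h := hg α (g.symm y)
      rw [hga, g.apply_symm_apply] at h
      exact h.mpr hxy
    have hEz : E α (g.symm z) := by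
      have h := hg α (g.symm z)
      rw [hga, g.apply_symm_apply] at h
      exact h.mpr hxz
    have hyW : g.symm y ∈ desc E α := ⟨1, g.symm y, hEy, rfl⟩
    have hzW : g.symm z ∈ desc E α := ⟨1, g.symm z, hEz, rfl⟩
    have hyL1 : (⟨g.symm y, hyW⟩ : desc E α) ∈
        descN (fun p q : desc E α => E p.1 q.1) 1 ⟨α, self_mem_desc E α⟩ :=
      ⟨⟨g.symm y, hyW⟩, hEy, rfl⟩
    have hzL1 : (⟨g.symm z, hzW⟩ : desc E α) ∈
        descN (fun p q : desc E α => E p.1 q.1) 1 ⟨α, self_mem_desc E α⟩ :=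
      ⟨⟨g.symm z, hzW⟩, hEz, rfl⟩
    have hy' := hKL n hn _ hyL1
    have hz' := hKL n hn _ hzL1
    have hdy : descN E n (g.symm y) = descN E n (g.symm z) := by
      rw [descN_subtype E α n ⟨g.symm y, hyW⟩, descN_subtype E α n ⟨g.symm z, hzW⟩,
        hy', hz']
    have himy : descN E n y = g '' descN E n (g.symm y) := by
      conv_lhs => rw [← g.apply_symm_apply y]
      exact descN_aut hg n (g.symm y)
    have himz : descN E n z = g '' descN E n (g.symm z) := by
      conv_lhs => rw [← g.apply_symm_apply z]
      exact descN_aut hg n (g.symm z)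
    rw [himy, himz, hdy]
  -- descN (n+1) depends only on descN n
  have hstep : ∀ x x' : V, descN E n x = descN E n x' →
      descN E (n + 1) x = descN E (n + 1) x' := by
    intro x x' h
    ext w
    simp only [descN, Set.mem_setOf_eq, arcOf_succ_right]
    constructor
    · rintro ⟨z, hz, hzw⟩
      exact ⟨z, (Set.ext_iff.1 h z).1 hz, hzw⟩
    · rintro ⟨z, hz, hzw⟩
      exact ⟨z, (Set.ext_iff.1 h z).2 hz, hzw⟩
  -- child's n-descendants = parent's (n+1)-descendants
  have hchild : ∀ x y : V, E x y → descN E n y = descN E (n + 1) x := by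
    intro x y hxy
    ext w
    constructor
    · intro hw
      exact ⟨y, hxy, hw⟩
    · rintro ⟨z, hxz, hzw⟩
      exact (Set.ext_iff.1 (key x z y hxz hxy) w).1 hzw
  obtain ⟨a, ha, b, hb, hab⟩ := h₁
  obtain ⟨a', ha', b', hb', hab'⟩ := h₂
  have hdv : descN E n v₁ = descN E n v₂ := by
    have hb1 : descN E n b = descN E n v₁ := hb
    have hb2 : descN E n b' = descN E n v₂ := hb'
    have haa : descN E n a = descN E n a' :=
      (show descN E n a = descN E n u from ha).trans
        (show descN E n a' = descN E n u from ha').symm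
    calc descN E n v₁ = descN E n b := hb1.symm
      _ = descN E (n + 1) a := hchild a b hab
      _ = descN E (n + 1) a' := hstep a a' haa
      _ = descN E n b' := (hchild a' b' hab').symm
      _ = descN E n v₂ := hb2
  show cls E n v₁ = cls E n v₂
  unfold cls
  rw [hdv]
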